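/- arXiv:2408.07753 — 2 statements merged into one kernel-verified Lean document; each statement's English description precedes it below -/
import Mathlib

section
/- In the augmented MDP, for any policy π on the original MDP with extension π̄, and for every non-absorbing state x and every real action a ∈ A, the Q-values satisfy Q^π(x,a) ≥ Q̄^{π̄}(x,a), where Q^π is the value in the original goal-oriented MDP and Q̄^{π̄} is the value in the augmented MDP. -/
open scoped ENNReal
open Classical

/-- Expectation of a real-valued function under a probability mass function. -/
noncomputable def pexp {σ : Type*} (p : PMF σ) (φ : σ → ℝ) : ℝ :=
  ∑' s, (p s).toReal * φ s

/-- Transition kernel of the action-augmented MDP: states `Option X` (with `none` the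
absorbing state `s⁺`), actions `Option A` (with `none` the fictitious action `a⁺`).
Taking `a⁺` always transitions to `s⁺`; real actions follow the original dynamics;
`s⁺` is absorbing. -/
noncomputable def augP {X A : Type*} (P : X → A → PMF X) :
    Option X → Option A → PMF (Option X)
  | some x, some a => (P x a).map some
  | _, _ => PMF.pure none

/-- Reward of the action-augmented MDP: reward `1` exactly when taking the fictitious
action `a⁺` at a goal state; all other rewards are `0`. -/
noncomputable def augR {X A : Type*} (G : Set X) : Option X → Option A → ℝ
  | some x, none => if x ∈ G then 1 else 0
  | _, _ => 0

/-- Extension `π̄` of a policy `π` to the augmented MDP: play the fictitious action `a⁺`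
exactly on goal states, otherwise follow `π`. -/
noncomputable def extPi {X A : Type*} (G : Set X) (π : X → PMF A) :
    Option X → PMF (Option A)
  | some x => if x ∈ G then PMF.pure none else (π x).map some
  | none => PMF.pure none

lemma pexp_fintype {σ : Type*} [Fintype σ] (p : PMF σ) (φ : σ → ℝ) :
    pexp p φ = ∑ s, (p s).toReal * φ s := tsum_fintype _

lemma tsum_toReal_pmf {σ : Type*} (p : PMF σ) : ∑' s, (p s).toReal = 1 := by
  rw [← ENNReal.tsum_toReal_eq (fun s => p.apply_ne_top s), p.tsum_coe, ENNReal.toReal_one]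

lemma pexp_const {σ : Type*} (p : PMF σ) (c : ℝ) : pexp p (fun _ => c) = c := by
  unfold pexp
  rw [tsum_mul_right, tsum_toReal_pmf, one_mul]

lemma pexp_pure {σ : Type*} [Fintype σ] (s : σ) (φ : σ → ℝ) :
    pexp (PMF.pure s) φ = φ s := by
  classical
  rw [pexp_fintype]
  simp only [PMF.pure_apply, apply_ite ENNReal.toReal, ENNReal.toReal_one,
    ENNReal.toReal_zero, ite_mul, one_mul, zero_mul]
  exact Finset.sum_ite_eq' Finset.univ s φ ▸ by simp

lemma pexp_map_some {X : Type*} [Fintype X] (p : PMF X) (φ : Option X → ℝ) :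
    pexp (p.map some) φ = pexp p (fun x => φ (some x)) := by
  have h1 : ∀ x : X, (p.map some) (some x) = p x := by
    intro x
    rw [PMF.map_apply, tsum_eq_single x (fun b hb => by simp [Ne.symm hb])]
    simp
  have h2 : (p.map some) none = 0 := by
    rw [PMF.map_apply]
    simp
  rw [pexp_fintype, pexp_fintype, Fintype.sum_option, h2]
  simp [h1]

lemma pexp_le {σ : Type*} [Fintype σ] (p : PMF σ) {φ ψ : σ → ℝ} (h : ∀ s, φ s ≤ ψ s) :
    pexp p φ ≤ pexp p ψ := by
  rw [pexp_fintype, pexp_fintype]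
  exact Finset.sum_le_sum fun s _ => mul_le_mul_of_nonneg_left (h s) ENNReal.toReal_nonneg

lemma pexp_le_const {σ : Type*} [Fintype σ] (p : PMF σ) {φ : σ → ℝ} {c : ℝ} (h : ∀ s, φ s ≤ c) :
    pexp p φ ≤ c := by
  calc pexp p φ ≤ pexp p (fun _ => c) := pexp_le p h
  _ = c := pexp_const p c

lemma pexp_sub {σ : Type*} [Fintype σ] (p : PMF σ) (φ ψ : σ → ℝ) :
    pexp p (fun s => φ s - ψ s) = pexp p φ - pexp p ψ := by
  rw [pexp_fintype, pexp_fintype, pexp_fintype, ← Finset.sum_sub_distrib]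
  congr 1; ext s; ring

/-- In the augmented MDP, for any policy `π` on the original MDP with
extension `π̄`, every non-absorbing state `x` and every real action `a ∈ A`,
`Q^π(x,a) ≥ Q̄^{π̄}(x,a)`: the original value dominates the augmented value on real
actions. `Q` and `Qb` are characterized by their Bellman equations. -/
theorem stmt2 {X A : Type*} [Fintype X] [Fintype A]
    (G : Set X) (P : X → A → PMF X) (π : X → PMF A)
    (γ : ℝ) (hγ0 : 0 ≤ γ) (hγ1 : γ < 1)
    (Q : X → A → ℝ) (Qb : Option X → Option A → ℝ)
    (hQ : ∀ x a, Q x a =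
      if x ∈ G then 1 else γ * pexp (P x a) (fun x' => pexp (π x') (Q x')))
    (hQb : ∀ ox oa, Qb ox oa =
      augR G ox oa + γ * pexp (augP P ox oa) (fun ox' => pexp (extPi G π ox') (Qb ox'))) :
    ∀ (x : X) (a : A), Qb (some x) (some a) ≤ Q x a := by
  intro x a
  haveI : Nonempty X := ⟨x⟩
  haveI : Nonempty A := ⟨a⟩
  set Vb : Option X → ℝ := fun ox => pexp (extPi G π ox) (Qb ox) with hVbdef
  -- absorbing state has value 0
  have hv : Vb none = Qb none none := by
    simp only [hVbdef, extPi, pexp_pure]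
  have hnn : Qb none none = 0 := by
    have h := hQb none none
    simp only [augR, augP, pexp_pure, extPi, zero_add] at h
    rw [hv] at h
    have h4 : (1 - γ) * Qb none none = 0 := by linarith
    rcases mul_eq_zero.mp h4 with h5 | h5
    · linarith
    · exact h5
  have hVbnone : Vb none = 0 := by rw [hv, hnn]
  -- value of fictitious action at real states
  have hQbgoal : ∀ y : X, Qb (some y) none = if y ∈ G then 1 else 0 := by
    intro y
    have h := hQb (some y) none
    simp only [augR, augP, pexp_pure] at h
    rw [h, hVbnone]
    ring
  have hVbsome_G : ∀ y ∈ G, Vb (some y) = 1 := by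
    intro y hy
    simp only [hVbdef, extPi, if_pos hy, pexp_pure, hQbgoal y, if_pos hy]
  have hVbsome_nG : ∀ y ∉ G, Vb (some y) = pexp (π y) (fun b => Qb (some y) (some b)) := by
    intro y hy
    simp only [hVbdef, extPi, if_neg hy, pexp_map_some]
  -- Bellman form for real actions
  have hQbform : ∀ (y : X) (b : A),
      Qb (some y) (some b) = γ * pexp (P y b) (fun x' => Vb (some x')) := by
    intro y b
    have h := hQb (some y) (some b)
    simp only [augR, augP, zero_add] at h
    rw [h, pexp_map_some]
  -- Q is bounded by 1
  have hQle1 : ∀ (y : X) (b : A), Q y b ≤ 1 := by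
    obtain ⟨⟨y0, b0⟩, hmax⟩ := Finite.exists_max (fun p : X × A => Q p.1 p.2)
    have hM : Q y0 b0 ≤ 1 := by
      by_cases hg : y0 ∈ G
      · rw [hQ, if_pos hg]
      · have h := hQ y0 b0
        rw [if_neg hg] at h
        have hb : pexp (P y0 b0) (fun x' => pexp (π x') (Q x')) ≤ Q y0 b0 :=
          pexp_le_const _ (fun x' => pexp_le_const _ (fun b' => hmax (x', b')))
        have hle : Q y0 b0 ≤ γ * Q y0 b0 := by
          calc Q y0 b0 = γ * pexp (P y0 b0) (fun x' => pexp (π x') (Q x')) := h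
          _ ≤ γ * Q y0 b0 := mul_le_mul_of_nonneg_left hb hγ0
        nlinarith
    exact fun y b => le_trans (hmax (y, b)) hM
  set W : X → ℝ := fun y => pexp (π y) (Q y) with hWdef
  have hWG : ∀ y ∈ G, W y = 1 := by
    intro y hy
    have : (fun b => Q y b) = fun _ => (1 : ℝ) := by
      funext b; rw [hQ, if_pos hy]
    simp only [hWdef]
    rw [show (Q y) = fun _ => (1:ℝ) from this, pexp_const]
  have hWle1 : ∀ y, W y ≤ 1 := fun y => pexp_le_const _ (fun b => hQle1 y b)
  -- Vb on real states is dominated by W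
  have hVbW : ∀ y, Vb (some y) ≤ W y := by
    obtain ⟨y0, hmax⟩ := Finite.exists_max (fun y : X => Vb (some y) - W y)
    have hD : Vb (some y0) - W y0 ≤ 0 := by
      by_cases hg : y0 ∈ G
      · rw [hVbsome_G y0 hg, hWG y0 hg]; norm_num
      · have h1 : Vb (some y0) - W y0
            = pexp (π y0) (fun b => Qb (some y0) (some b) - Q y0 b) := by
          rw [pexp_sub, hVbsome_nG y0 hg]
        have h2 : ∀ b, Qb (some y0) (some b) - Q y0 b ≤ γ * (Vb (some y0) - W y0) := by
          intro b
          rw [hQbform, hQ, if_neg hg, ← mul_sub, ← pexp_sub]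
          refine mul_le_mul_of_nonneg_left (pexp_le_const _ (fun x' => ?_)) hγ0
          exact hmax x'
        have h3 : Vb (some y0) - W y0 ≤ γ * (Vb (some y0) - W y0) := by
          calc Vb (some y0) - W y0
              = pexp (π y0) (fun b => Qb (some y0) (some b) - Q y0 b) := h1
          _ ≤ γ * (Vb (some y0) - W y0) := pexp_le_const _ h2
        nlinarith
    intro y
    have := hmax y
    linarith
  -- conclusion
  rw [hQbform x a, hQ]
  by_cases hg : x ∈ G
  · rw [if_pos hg]
    have h1 : pexp (P x a) (fun x' => Vb (some x')) ≤ 1 :=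
      pexp_le_const _ (fun x' => le_trans (hVbW x') (hWle1 x'))
    nlinarith
  · rw [if_neg hg]
    exact mul_le_mul_of_nonneg_left (pexp_le _ (fun x' => hVbW x')) hγ0
end

section
/- Performance-difference decomposition for the augmented MDP: for any policy π on the original MDP with extension π̄, and any extended value function f̄_g with components (f, g) satisfying f̄_g((s⁺,c), a) = 0, the underestimation of the policy value satisfies Q^π(d₀, π) − f̄_g(d₀, π̄) ≤ E_π[ ∑_{t=0}^{T−1} γ^t ( γ·max(g(x_{t+1}), f(x_{t+1}, π)) − f(x_t, a_t) ) + γ^T ( R(x_T) − g(x_T) ) ], where T is the first time the trajectory enters the goal set G, assuming the initial state x₀ ∼ d₀ is not in G almost surely. -/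
/-!
Write `F x = f(x, π)` and let `T` be the hitting time of `G`. Along a trajectory, the terms
`γ^t (γ max(g x_{t+1}, F x_{t+1}) - F x_t)` for `t < T` dominate the increments of the sequence
`γ^t F x_t`, whose last value is replaced by `γ^T g x_T`; so their sum is at least
`γ^T g x_T - F x_0`, and adding `γ^T (1 - g x_T)` gives `γ^T - F x_0`, which is the discounted
return minus `F x_0` because the goal is never revisited. When the goal is never hit, the partial
sums are at least `γ^N F x_N - F x_0 ≥ -F x_0` and the return is `0`. In expectation the Markov
property replaces `f(x_t, a_t)` by `F x_t` term by term, the domination by `γ^t` allowing the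
exchange of expectation and series.
-/

open MeasureTheory Classical

open Set Finset Filter

lemma pexp_mem_Icc {σ : Type*} (p : PMF σ) {φ : σ → ℝ} (hφ : ∀ s, φ s ∈ Icc (0 : ℝ) 1) :
    pexp p φ ∈ Icc (0 : ℝ) 1 := by
  have hp : Summable fun s => (p s).toReal :=
    ENNReal.summable_toReal (p.tsum_coe ▸ ENNReal.one_ne_top)
  have hp_one : ∑' s, (p s).toReal = 1 := by
    rw [← ENNReal.tsum_toReal_eq p.apply_ne_top, p.tsum_coe, ENNReal.toReal_one]
  have hle : ∀ s, (p s).toReal * φ s ≤ (p s).toReal :=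
    fun s => mul_le_of_le_one_right ENNReal.toReal_nonneg (hφ s).2
  have hnonneg : ∀ s, 0 ≤ (p s).toReal * φ s :=
    fun s => mul_nonneg ENNReal.toReal_nonneg (hφ s).1
  refine ⟨tsum_nonneg hnonneg, ?_⟩
  calc pexp p φ ≤ ∑' s, (p s).toReal :=
        (hp.of_nonneg_of_le hnonneg hle).tsum_le_tsum hle hp
    _ = 1 := hp_one

section DominatedSeries

variable {Ω E : Type*} [MeasurableSpace Ω] {μ : Measure Ω} [IsFiniteMeasure μ]
  [NormedAddCommGroup E] [CompleteSpace E]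
  {h : ℕ → Ω → E} {c : ℕ → ℝ}

lemma integrable_tsum_of_norm_le (hm : ∀ n, AEStronglyMeasurable (h n) μ)
    (hb : ∀ n ω, ‖h n ω‖ ≤ c n) (hc : Summable c) :
    Integrable (fun ω => ∑' n, h n ω) μ := by
  have hsum : ∀ ω, Summable fun n => h n ω := fun ω => hc.of_norm_bounded (hb · ω)
  refine .of_bound (aestronglyMeasurable_of_tendsto_ae atTop
    (f := fun N ω => ∑ n ∈ range N, h n ω) (fun N => Finset.aestronglyMeasurable_fun_sum _
      fun n _ => hm n) (ae_of_all _ fun ω => (hsum ω).hasSum.tendsto_sum_nat)) (∑' n, c n) ?_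
  exact ae_of_all _ fun ω => tsum_of_norm_bounded hc.hasSum (hb · ω)

lemma integral_tsum_of_norm_le [NormedSpace ℝ E] (hm : ∀ n, AEStronglyMeasurable (h n) μ)
    (hb : ∀ n ω, ‖h n ω‖ ≤ c n) (hc : Summable c) :
    ∫ ω, ∑' n, h n ω ∂μ = ∑' n, ∫ ω, h n ω ∂μ :=
  (hasSum_integral_of_dominated_convergence (fun n _ => c n) hm (fun n => ae_of_all _ (hb n))
    (ae_of_all _ fun _ => hc) (integrable_const _)
    (ae_of_all _ fun ω => (hc.of_norm_bounded (hb · ω)).hasSum)).tsum_eq.symm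

end DominatedSeries

section Telescoping

variable {γ : ℝ} {F M : ℕ → ℝ}

lemma pow_mul_sub_le_sum_range (hγ : 0 ≤ γ) (hFM : ∀ t, F t ≤ M t) (N : ℕ) :
    γ ^ N * F N - F 0 ≤ ∑ t ∈ range N, γ ^ t * (γ * M (t + 1) - F t) := by
  induction N with
  | zero => simp
  | succ N ih =>
    have hM : γ ^ (N + 1) * F (N + 1) ≤ γ ^ (N + 1) * M (N + 1) :=
      mul_le_mul_of_nonneg_left (hFM _) (pow_nonneg hγ _)
    rw [sum_range_succ, mul_sub, ← mul_assoc, ← pow_succ]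
    linarith

lemma pow_succ_mul_sub_le_sum_range (hγ : 0 ≤ γ) (hFM : ∀ t, F t ≤ M t) (N : ℕ) :
    γ ^ (N + 1) * M (N + 1) - F 0 ≤ ∑ t ∈ range (N + 1), γ ^ t * (γ * M (t + 1) - F t) := by
  rw [sum_range_succ, mul_sub, ← mul_assoc, ← pow_succ]
  linarith [pow_mul_sub_le_sum_range hγ hFM N]

lemma neg_le_tsum_pow_mul_sub (hγ : 0 ≤ γ) (hFM : ∀ t, F t ≤ M t) (hF : ∀ t, 0 ≤ F t)
    (hs : Summable fun t => γ ^ t * (γ * M (t + 1) - F t)) :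
    -F 0 ≤ ∑' t, γ ^ t * (γ * M (t + 1) - F t) :=
  ge_of_tendsto' hs.hasSum.tendsto_sum_nat fun N => by
    linarith [pow_mul_sub_le_sum_range hγ hFM N, mul_nonneg (pow_nonneg hγ N) (hF N)]

end Telescoping

lemma Nat.forall_le_not_iff_lt_sInf {p : ℕ → Prop} (hp : ∃ n, p n) (n : ℕ) :
    (∀ m ≤ n, ¬ p m) ↔ n < sInf {m | p m} :=
  ⟨fun h => lt_of_not_ge fun hle => h _ hle (Nat.sInf_mem hp),
    fun hn _ hm => Nat.notMem_of_lt_sInf (hm.trans_lt hn)⟩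

lemma tsum_ite_eq_ite_exists {p : ℕ → Prop} [DecidablePred p]
    (hp : ∀ m n, m < n → p m → ¬ p n) (φ : ℕ → ℝ) :
    ∑' n, (if p n then φ n else 0) = if ∃ n, p n then φ (sInf {n | p n}) else 0 := by
  by_cases hex : ∃ n, p n
  · have hmem : p (sInf {n | p n}) := Nat.sInf_mem hex
    rw [if_pos hex, tsum_eq_single (sInf {n | p n}), if_pos hmem]
    intro n hn
    exact if_neg fun hpn => hp _ n ((Nat.sInf_le hpn).lt_of_ne' hn) hmem hpn
  · push Not at hex
    simp [hex]

lemma abs_mul_sub_le_one {γ a b : ℝ} (hγ : γ ∈ Icc (0 : ℝ) 1) (ha : a ∈ Icc (0 : ℝ) 1)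
    (hb : b ∈ Icc (0 : ℝ) 1) : |γ * a - b| ≤ 1 :=
  abs_sub_le_of_nonneg_of_le (mul_nonneg hγ.1 ha.1) (mul_le_one₀ hγ.2 ha.1 ha.2) hb.1 hb.2

lemma abs_ite_pow_mul_le {γ a : ℝ} (hγ : 0 ≤ γ) (ha : |a| ≤ 1) (p : Prop) [Decidable p]
    (t : ℕ) :
    |if p then γ ^ t * a else 0| ≤ γ ^ t := by
  split_ifs
  · rw [abs_mul, abs_of_nonneg (pow_nonneg hγ t)]
    exact mul_le_of_le_one_right (pow_nonneg hγ t) ha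
  · simpa using pow_nonneg hγ t

section Trajectory

variable {X : Type*} {x : ℕ → X} {G : Set X} {γ : ℝ}

lemma discounted_return_sub_le (hγ0 : 0 ≤ γ) (hγ1 : γ < 1)
    (hx : ∀ t t', t < t' → x t ∈ G → x t' ∉ G) (hx0 : x 0 ∉ G) {g F : X → ℝ}
    (hg : ∀ y, g y ∈ Icc (0 : ℝ) 1) (hF : ∀ y, F y ∈ Icc (0 : ℝ) 1) :
    (∑' t, γ ^ t * (if x t ∈ G then (1 : ℝ) else 0)) - F (x 0)
      ≤ (∑' t, if ∀ s ≤ t, x s ∉ G then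
            γ ^ t * (γ * max (g (x (t + 1))) (F (x (t + 1))) - F (x t)) else 0)
        + (if ∃ t, x t ∈ G then
            γ ^ sInf {t | x t ∈ G} * ((if x (sInf {t | x t ∈ G}) ∈ G then (1 : ℝ) else 0)
              - g (x (sInf {t | x t ∈ G})))
          else 0) := by
  have hR : ∑' t, γ ^ t * (if x t ∈ G then (1 : ℝ) else 0)
      = if ∃ t, x t ∈ G then γ ^ sInf {t | x t ∈ G} else 0 := by
    simp only [mul_ite, mul_one, mul_zero]
    exact tsum_ite_eq_ite_exists (p := fun t => x t ∈ G) hx _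
  have hFM : ∀ t, F (x t) ≤ max (g (x t)) (F (x t)) := fun t => le_max_right _ _
  by_cases hex : ∃ t, x t ∈ G
  · set N := sInf {t | x t ∈ G}
    have hN : x N ∈ G := Nat.sInf_mem hex
    obtain ⟨K, hK⟩ : ∃ K, N = K + 1 :=
      Nat.exists_eq_add_one.2 (Nat.pos_of_ne_zero fun h0 => hx0 (h0 ▸ hN))
    have hsum : (∑' t, if ∀ s ≤ t, x s ∉ G then
          γ ^ t * (γ * max (g (x (t + 1))) (F (x (t + 1))) - F (x t)) else 0)
        = ∑ t ∈ range N, γ ^ t * (γ * max (g (x (t + 1))) (F (x (t + 1))) - F (x t)) := by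
      rw [tsum_eq_sum (s := range N) fun t ht => if_neg (by
        rw [Nat.forall_le_not_iff_lt_sInf (p := fun t => x t ∈ G) hex]; simpa using ht)]
      exact sum_congr rfl fun t ht => if_pos
        ((Nat.forall_le_not_iff_lt_sInf (p := fun t => x t ∈ G) hex t).2 (mem_range.1 ht))
    have htel := pow_succ_mul_sub_le_sum_range hγ0 hFM K
    have hg_le : γ ^ N * g (x N) ≤ γ ^ N * max (g (x N)) (F (x N)) :=
      mul_le_mul_of_nonneg_left (le_max_left _ _) (pow_nonneg hγ0 N)
    rw [hR, hsum, if_pos hex, if_pos hex, if_pos hN]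
    rw [hK] at hg_le ⊢
    linarith
  · have hnot : ∀ t, x t ∉ G := fun t ht => hex ⟨t, ht⟩
    rw [hR, if_neg hex, if_neg hex, tsum_congr fun t => if_pos fun s _ => hnot s]
    have hs : Summable fun t => γ ^ t * (γ * max (g (x (t + 1))) (F (x (t + 1))) - F (x t)) :=
      (summable_geometric_of_lt_one hγ0 hγ1).of_norm_bounded fun t => by
        simpa using abs_ite_pow_mul_le hγ0 (abs_mul_sub_le_one ⟨hγ0, hγ1.le⟩
          ⟨le_max_of_le_left (hg _).1, max_le (hg _).2 (hF _).2⟩ (hF (x t))) True t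
    linarith [neg_le_tsum_pow_mul_sub hγ0 hFM (fun t => (hF (x t)).1) hs]

end Trajectory

section Integrals

variable {Ω : Type*} [MeasurableSpace Ω] {μ : Measure Ω}

lemma integral_ite_mul_sub_congr {p : Ω → Prop} [DecidablePred p] (hp : MeasurableSet {ω | p ω})
    {m u v : Ω → ℝ} (hm : Integrable m μ) (hu : Integrable u μ) (hv : Integrable v μ)
    (huv : ∫ ω, (if p ω then u ω else 0) ∂μ = ∫ ω, (if p ω then v ω else 0) ∂μ) (c d : ℝ) :
    ∫ ω, (if p ω then c * (d * m ω - u ω) else 0) ∂μ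
      = ∫ ω, (if p ω then c * (d * m ω - v ω) else 0) ∂μ := by
  have hite : ∀ {w : Ω → ℝ}, Integrable w μ → Integrable (fun ω => if p ω then w ω else 0) μ :=
    fun hw => (hw.indicator hp).congr (ae_of_all _ fun ω => by simp [Set.indicator_apply])
  have hsplit : ∀ w : Ω → ℝ, (fun ω => if p ω then c * (d * m ω - w ω) else 0)
      = fun ω => c * d * (if p ω then m ω else 0) - c * (if p ω then w ω else 0) := by
    intro w; funext ω; split_ifs <;> ring
  rw [hsplit, hsplit, integral_sub ((hite hm).const_mul _) ((hite hu).const_mul _),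
    integral_sub ((hite hm).const_mul _) ((hite hv).const_mul _), integral_const_mul,
    integral_const_mul, integral_const_mul, huv]

lemma integral_sub_le_integral_add_of_ae_le {R F₀ S S' B : Ω → ℝ} (hR : Integrable R μ)
    (hF₀ : Integrable F₀ μ) (hS : Integrable S μ) (hS' : Integrable S' μ) (hB : Integrable B μ)
    (hSS' : ∫ ω, S ω ∂μ = ∫ ω, S' ω ∂μ) (hle : ∀ᵐ ω ∂μ, R ω - F₀ ω ≤ S' ω + B ω) :
    ∫ ω, R ω ∂μ - ∫ ω, F₀ ω ∂μ ≤ ∫ ω, (S ω + B ω) ∂μ := by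
  rw [← integral_sub hR hF₀, integral_add hS hB, hSS', ← integral_add hS' hB]
  exact integral_mono_ae (hR.sub hF₀) (hS'.add hB) hle

end Integrals

section DiscountedSeries

variable {Ω : Type*} [MeasurableSpace Ω] {μ : Measure Ω} [IsFiniteMeasure μ] {γ : ℝ}
  {p : ℕ → Ω → Prop} [∀ t, DecidablePred (p t)]

lemma integrable_tsum_ite_pow_mul (hγ0 : 0 ≤ γ) (hγ1 : γ < 1)
    (hp : ∀ t, MeasurableSet {ω | p t ω}) {a : ℕ → Ω → ℝ} (ha : ∀ t, Measurable (a t))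
    (hab : ∀ t ω, |a t ω| ≤ 1) :
    Integrable (fun ω => ∑' t, if p t ω then γ ^ t * a t ω else 0) μ :=
  integrable_tsum_of_norm_le
    (fun t => (((ha t).const_mul _).ite (hp t) measurable_const).aestronglyMeasurable)
    (fun t ω => (Real.norm_eq_abs _).trans_le (abs_ite_pow_mul_le hγ0 (hab t ω) _ t))
    (summable_geometric_of_lt_one hγ0 hγ1)

lemma integral_tsum_ite_pow_mul (hγ0 : 0 ≤ γ) (hγ1 : γ < 1)
    (hp : ∀ t, MeasurableSet {ω | p t ω}) {a : ℕ → Ω → ℝ} (ha : ∀ t, Measurable (a t))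
    (hab : ∀ t ω, |a t ω| ≤ 1) :
    ∫ ω, (∑' t, if p t ω then γ ^ t * a t ω else 0) ∂μ
      = ∑' t, ∫ ω, (if p t ω then γ ^ t * a t ω else 0) ∂μ :=
  integral_tsum_of_norm_le
    (fun t => (((ha t).const_mul _).ite (hp t) measurable_const).aestronglyMeasurable)
    (fun t ω => (Real.norm_eq_abs _).trans_le (abs_ite_pow_mul_le hγ0 (hab t ω) _ t))
    (summable_geometric_of_lt_one hγ0 hγ1)

lemma integral_tsum_ite_pow_mul_sub_congr (hγ0 : 0 ≤ γ) (hγ1 : γ < 1)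
    (hp : ∀ t, MeasurableSet {ω | p t ω}) {m u v : ℕ → Ω → ℝ}
    (hm : ∀ t, Measurable (m t)) (hu : ∀ t, Measurable (u t)) (hv : ∀ t, Measurable (v t))
    (hmI : ∀ t ω, m t ω ∈ Icc (0 : ℝ) 1) (huI : ∀ t ω, u t ω ∈ Icc (0 : ℝ) 1)
    (hvI : ∀ t ω, v t ω ∈ Icc (0 : ℝ) 1)
    (huv : ∀ t, ∫ ω, (if p t ω then u t ω else 0) ∂μ = ∫ ω, (if p t ω then v t ω else 0) ∂μ) :
    ∫ ω, (∑' t, if p t ω then γ ^ t * (γ * m t ω - u t ω) else 0) ∂μ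
      = ∫ ω, (∑' t, if p t ω then γ ^ t * (γ * m t ω - v t ω) else 0) ∂μ := by
  have hγ : γ ∈ Icc (0 : ℝ) 1 := ⟨hγ0, hγ1.le⟩
  have hint : ∀ {w : ℕ → Ω → ℝ}, (∀ t, Measurable (w t)) → (∀ t ω, w t ω ∈ Icc (0 : ℝ) 1) →
      ∀ t, Integrable (w t) μ :=
    fun hw hwI t => .of_mem_Icc 0 1 (hw t).aemeasurable (ae_of_all _ (hwI t))
  rw [integral_tsum_ite_pow_mul (a := fun t ω => γ * m t ω - u t ω) hγ0 hγ1 hp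
      (fun t => ((hm t).const_mul γ).sub (hu t))
      (fun t ω => abs_mul_sub_le_one hγ (hmI t ω) (huI t ω)),
    integral_tsum_ite_pow_mul (a := fun t ω => γ * m t ω - v t ω) hγ0 hγ1 hp
      (fun t => ((hm t).const_mul γ).sub (hv t))
      (fun t ω => abs_mul_sub_le_one hγ (hmI t ω) (hvI t ω))]
  exact tsum_congr fun t => integral_ite_mul_sub_congr (hp t) (hint hm hmI t) (hint hu huI t)
    (hint hv hvI t) (huv t) _ _

end DiscountedSeries

theorem stmt8_general {Ω X A : Type*} [MeasurableSpace Ω] [MeasurableSpace X]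
    (μ : Measure Ω) [IsProbabilityMeasure μ]
    (st : ℕ → Ω → X) (ac : ℕ → Ω → A)
    (hst : ∀ t, Measurable (st t))
    (G : Set X) (hG : MeasurableSet G)
    (π : X → PMF A)
    (γ : ℝ) (hγ0 : 0 ≤ γ) (hγ1 : γ < 1)
    (f : X → A → ℝ) (g : X → ℝ)
    (hf : ∀ x a, f x a ∈ Set.Icc (0 : ℝ) 1) (hg : ∀ x, g x ∈ Set.Icc (0 : ℝ) 1)
    (hmf : ∀ t, Measurable fun ω => f (st t ω) (ac t ω))
    (hmg : Measurable g)
    (hmfπ : Measurable fun x => pexp (π x) (f x))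
    (habs : ∀ ω (t t' : ℕ), t < t' → st t ω ∈ G → st t' ω ∉ G)
    (hinit : ∀ᵐ ω ∂μ, st 0 ω ∉ G)
    (hMarkov : ∀ t : ℕ,
      ∫ ω, (if ∀ s ≤ t, st s ω ∉ G then f (st t ω) (ac t ω) else 0) ∂μ
        = ∫ ω, (if ∀ s ≤ t, st s ω ∉ G then pexp (π (st t ω)) (f (st t ω)) else 0) ∂μ) :
    (∫ ω, (∑' t : ℕ, γ ^ t * (if st t ω ∈ G then (1 : ℝ) else 0)) ∂μ)
        - (∫ ω, pexp (π (st 0 ω)) (f (st 0 ω)) ∂μ)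
      ≤ ∫ ω,
          ((∑' t : ℕ, if ∀ s ≤ t, st s ω ∉ G then
              γ ^ t * (γ * max (g (st (t + 1) ω)) (pexp (π (st (t + 1) ω)) (f (st (t + 1) ω)))
                - f (st t ω) (ac t ω))
            else 0)
          + (if ∃ t, st t ω ∈ G then
              γ ^ sInf {t | st t ω ∈ G}
                * ((if st (sInf {t | st t ω ∈ G}) ω ∈ G then (1 : ℝ) else 0)
                    - g (st (sInf {t | st t ω ∈ G}) ω))
            else 0)) ∂μ := by
  set F : X → ℝ := fun y => pexp (π y) (f y)
  have hF : ∀ y, F y ∈ Set.Icc (0 : ℝ) 1 := fun y => pexp_mem_Icc _ (hf y)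
  have hMI : ∀ y, max (g y) (F y) ∈ Set.Icc (0 : ℝ) 1 :=
    fun y => ⟨le_max_of_le_left (hg y).1, max_le (hg y).2 (hF y).2⟩
  have hF_meas : ∀ t, Measurable fun ω => F (st t ω) := fun t => hmfπ.comp (hst t)
  have hM_meas : ∀ t, Measurable fun ω => max (g (st (t + 1) ω)) (F (st (t + 1) ω)) :=
    fun t => (hmg.max hmfπ).comp (hst (t + 1))
  have hIn : ∀ t, MeasurableSet {ω | st t ω ∈ G} := fun t => hst t hG
  have hBefore : ∀ t, MeasurableSet {ω | ∀ s ≤ t, st s ω ∉ G} := fun t => by measurability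
  have hresidual : ∀ u : ℕ → Ω → ℝ, (∀ t, Measurable (u t)) → (∀ t ω, u t ω ∈ Set.Icc (0 : ℝ) 1) →
      Integrable (fun ω => ∑' t, if ∀ s ≤ t, st s ω ∉ G then
        γ ^ t * (γ * max (g (st (t + 1) ω)) (F (st (t + 1) ω)) - u t ω) else 0) μ :=
    fun u hu huI => integrable_tsum_ite_pow_mul hγ0 hγ1 hBefore
      (fun t => ((hM_meas t).const_mul γ).sub (hu t))
      (fun t ω => abs_mul_sub_le_one ⟨hγ0, hγ1.le⟩ (hMI _) (huI t ω))
  refine integral_sub_le_integral_add_of_ae_le (S' := fun ω => ∑' t, if ∀ s ≤ t, st s ω ∉ G then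
      γ ^ t * (γ * max (g (st (t + 1) ω)) (F (st (t + 1) ω)) - F (st t ω)) else 0)
    ?_ (.of_mem_Icc 0 1 (hF_meas 0).aemeasurable (ae_of_all _ fun ω => hF _))
    (hresidual _ hmf fun t ω => hf _ _) (hresidual _ hF_meas fun t ω => hF _) ?_
    (integral_tsum_ite_pow_mul_sub_congr hγ0 hγ1 hBefore hM_meas hmf hF_meas
      (fun t ω => hMI _) (fun t ω => hf _ _) (fun t ω => hF _) hMarkov) ?_
  · simp only [mul_ite, mul_zero]
    exact integrable_tsum_ite_pow_mul hγ0 hγ1 hIn (fun _ => measurable_const) (by simp)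
  · refine (integrable_tsum_ite_pow_mul hγ0 hγ1 hIn
      (fun t => (measurable_const.ite (hIn t) measurable_const).sub (hmg.comp (hst t)))
      (fun t ω => abs_sub_le_of_nonneg_of_le ?_ ?_ (hg _).1 (hg _).2)).congr
      (ae_of_all _ fun ω => tsum_ite_eq_ite_exists (p := fun t => st t ω ∈ G) (habs ω) _)
    all_goals beta_reduce; split_ifs <;> norm_num
  · filter_upwards [hinit] with ω h0
    exact discounted_return_sub_le hγ0 hγ1 (habs ω) h0 hg hF

/-- Performance-difference decomposition for the augmented MDP. Let `μ`
be the trajectory distribution of the policy `π` started from `d₀` (states `st`, actions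
`ac`; `hMarkov` expresses that before the goal-hitting time the action `a_t` has
conditional law `π(x_t)`; `habs` expresses termination: the goal is never revisited;
`hinit` says the initial state is outside `G` a.s.). For any `f : X × A → [0,1]` and
`g : X → [0,1]` (components of an extended value function `f̄_g`, which vanishes on the
absorbing state), the underestimation satisfies
`Q^π(d₀,π) − f̄_g(d₀,π̄) ≤ E_π[∑_{t=0}^{T−1} γ^t (γ·max(g(x_{t+1}), f(x_{t+1},π)) −
f(x_t,a_t)) + γ^T (R(x_T) − g(x_T))]`, where `T = sInf {t | x_t ∈ G}` is the hitting
time of `G`, `Q^π(d₀,π)` is the expected discounted return `E[∑_t γ^t 1(x_t ∈ G)]`,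
`f̄_g(d₀,π̄) = E[f(x₀,π)]`, and `t < T` is expressed as `∀ s ≤ t, x_s ∉ G`. -/
theorem stmt8 {Ω X A : Type*} [MeasurableSpace Ω] [MeasurableSpace X] [Fintype A]
    (μ : Measure Ω) [IsProbabilityMeasure μ]
    (st : ℕ → Ω → X) (ac : ℕ → Ω → A)
    (hst : ∀ t, Measurable (st t))
    (G : Set X) (hG : MeasurableSet G)
    (π : X → PMF A)
    (γ : ℝ) (hγ0 : 0 ≤ γ) (hγ1 : γ < 1)
    (f : X → A → ℝ) (g : X → ℝ)
    (hf : ∀ x a, f x a ∈ Set.Icc (0 : ℝ) 1) (hg : ∀ x, g x ∈ Set.Icc (0 : ℝ) 1)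
    (hmf : ∀ t, Measurable fun ω => f (st t ω) (ac t ω))
    (hmg : Measurable g)
    (hmfπ : Measurable fun x => pexp (π x) (f x))
    (habs : ∀ ω (t t' : ℕ), t < t' → st t ω ∈ G → st t' ω ∉ G)
    (hinit : ∀ᵐ ω ∂μ, st 0 ω ∉ G)
    (hMarkov : ∀ t : ℕ,
      ∫ ω, (if ∀ s ≤ t, st s ω ∉ G then f (st t ω) (ac t ω) else 0) ∂μ
        = ∫ ω, (if ∀ s ≤ t, st s ω ∉ G then pexp (π (st t ω)) (f (st t ω)) else 0) ∂μ) :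
    (∫ ω, (∑' t : ℕ, γ ^ t * (if st t ω ∈ G then (1 : ℝ) else 0)) ∂μ)
        - (∫ ω, pexp (π (st 0 ω)) (f (st 0 ω)) ∂μ)
      ≤ ∫ ω,
          ((∑' t : ℕ, if ∀ s ≤ t, st s ω ∉ G then
              γ ^ t * (γ * max (g (st (t + 1) ω)) (pexp (π (st (t + 1) ω)) (f (st (t + 1) ω)))
                - f (st t ω) (ac t ω))
            else 0)
          + (if ∃ t, st t ω ∈ G then
              γ ^ sInf {t | st t ω ∈ G}
                * ((if st (sInf {t | st t ω ∈ G}) ω ∈ G then (1 : ℝ) else 0)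
                    - g (st (sInf {t | st t ω ∈ G}) ω))
            else 0)) ∂μ :=
  stmt8_general μ st ac hst G hG π γ hγ0 hγ1 f g hf hg hmf hmg hmfπ habs hinit hMarkov
end
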